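/- Let (Φ_σ)_{σ ∈ (0,1]} be a family of maps from a compact set S ⊂ ℝ³ into a Hilbert space such that (i) ‖Φ_σ(p+k) - Φ_σ(p)‖ ≤ C|k|σ^{-1/2} for all applicable p, p+k ∈ S, and (ii) ‖Φ_σ(p) - Φ_{σ'}(p)‖ ≤ C σ^{1-δ} for 0 < σ' < σ ≤ 1 and some δ ∈ (0,1/3). Then there is C' such that for all σ ∈ (0,1] and p, p+k ∈ S, ‖Φ_σ(p+k) - Φ_σ(p)‖ ≤ C'|k|^{(2/3)(1-δ)}. -/

import Mathlib

/-!
Interpolate between the two hypotheses at the scale `τ = |k|^{2/3}`, where the Lipschitz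
bound `C |k| τ^{-1/2}` and the scale-comparison bound `C τ^{1-δ}` are both of order
`|k|^{(2/3)(1-δ)}`. For `σ ≥ τ` the Lipschitz bound applies directly; for `σ < τ`, pass from
`Φ_σ` to `Φ_τ` at both points. Large `|k|` is handled by the uniform bound on `Φ_σ`.
-/

open Set

lemma Real.mul_rpow_neg_half_le_rpow_two_thirds {r s : ℝ} (hr : 0 < r)
    (hs : r ^ (2 / 3 : ℝ) ≤ s) : r * s ^ (-(1 / 2) : ℝ) ≤ r ^ (2 / 3 : ℝ) :=
  calc r * s ^ (-(1 / 2) : ℝ)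
      ≤ r * (r ^ (2 / 3 : ℝ)) ^ (-(1 / 2) : ℝ) := by
        gcongr r * ?_
        exact Real.rpow_le_rpow_of_nonpos (by positivity) hs (by norm_num)
    _ = r ^ (1 + 2 / 3 * -(1 / 2) : ℝ) := by
        rw [← Real.rpow_mul hr.le, Real.rpow_add hr, Real.rpow_one]
    _ = r ^ (2 / 3 : ℝ) := by norm_num

section Interpolation

variable {X E : Type*} [SeminormedAddCommGroup E] {Φ : ℝ → X → E} {x y : X} {C δ r : ℝ}

lemma norm_sub_le_rpow_of_rpow_two_thirds_le (hδ : 0 ≤ δ) (hr0 : 0 < r) (hr1 : r ≤ 1)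
    (hlip : ∀ s ∈ Ioc (0 : ℝ) 1, ‖Φ s y - Φ s x‖ ≤ C * r * s ^ (-(1 / 2) : ℝ))
    {s : ℝ} (hs : r ^ (2 / 3 : ℝ) ≤ s) (hs1 : s ≤ 1) :
    ‖Φ s y - Φ s x‖ ≤ C * r ^ (2 / 3 * (1 - δ)) := by
  have hs0 : 0 < s := (Real.rpow_pos_of_pos hr0 _).trans_le hs
  have hC : 0 ≤ C := by
    have h := (norm_nonneg _).trans (hlip 1 ⟨one_pos, le_rfl⟩)
    rw [Real.one_rpow, mul_one] at h
    exact nonneg_of_mul_nonneg_left h hr0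
  calc ‖Φ s y - Φ s x‖ ≤ C * (r * s ^ (-(1 / 2) : ℝ)) := by
        rw [← mul_assoc]; exact hlip s ⟨hs0, hs1⟩
    _ ≤ C * r ^ (2 / 3 : ℝ) := by
        gcongr; exact Real.mul_rpow_neg_half_le_rpow_two_thirds hr0 hs
    _ ≤ C * r ^ (2 / 3 * (1 - δ)) := by
        gcongr C * ?_
        exact Real.rpow_le_rpow_of_exponent_ge hr0 hr1 (by linarith)

lemma norm_sub_le_three_mul_rpow_of_scale_cauchy (hδ : 0 ≤ δ) (hr0 : 0 < r) (hr1 : r < 1)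
    (hlip : ∀ s ∈ Ioc (0 : ℝ) 1, ‖Φ s y - Φ s x‖ ≤ C * r * s ^ (-(1 / 2) : ℝ))
    (hx : ∀ s' s : ℝ, 0 < s' → s' < s → s ≤ 1 → ‖Φ s x - Φ s' x‖ ≤ C * s ^ (1 - δ))
    (hy : ∀ s' s : ℝ, 0 < s' → s' < s → s ≤ 1 → ‖Φ s y - Φ s' y‖ ≤ C * s ^ (1 - δ))
    {σ : ℝ} (hσ : σ ∈ Ioc (0 : ℝ) 1) :
    ‖Φ σ y - Φ σ x‖ ≤ 3 * C * r ^ (2 / 3 * (1 - δ)) := by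
  set τ := r ^ (2 / 3 : ℝ)
  have hτ1 : τ ≤ 1 := Real.rpow_le_one hr0.le hr1.le (by norm_num)
  have hτδ : τ ^ (1 - δ) = r ^ (2 / 3 * (1 - δ)) := (Real.rpow_mul hr0.le _ _).symm
  have hlarge {s : ℝ} (hs : τ ≤ s) (hs1 : s ≤ 1) :=
    norm_sub_le_rpow_of_rpow_two_thirds_le hδ hr0 hr1.le hlip hs hs1
  have hC : 0 ≤ C * r ^ (2 / 3 * (1 - δ)) := (norm_nonneg _).trans (hlarge le_rfl hτ1)
  rcases le_or_gt τ σ with hτσ | hστ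
  · linarith [hlarge hτσ hσ.2]
  · have hτx := hx σ τ hσ.1 hστ hτ1
    have hτy := hy σ τ hσ.1 hστ hτ1
    rw [hτδ] at hτx hτy
    calc ‖Φ σ y - Φ σ x‖ = dist (Φ σ y) (Φ σ x) := (dist_eq_norm _ _).symm
      _ ≤ dist (Φ σ y) (Φ τ y) + dist (Φ τ y) (Φ τ x) + dist (Φ τ x) (Φ σ x) :=
        dist_triangle4 _ _ _ _
      _ = ‖Φ τ y - Φ σ y‖ + ‖Φ τ y - Φ τ x‖ + ‖Φ τ x - Φ σ x‖ := by
        simp only [dist_eq_norm, norm_sub_rev (Φ σ y)]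
      _ ≤ 3 * C * r ^ (2 / 3 * (1 - δ)) := by linarith [hlarge le_rfl hτ1]

end Interpolation

theorem stmt_14_general
    {F : Type*} [NormedAddCommGroup F]
    (S : Set (EuclideanSpace ℝ (Fin 3)))
    (Φ : ℝ → EuclideanSpace ℝ (Fin 3) → F)
    (C δ : ℝ) (hδ : δ ∈ Set.Ioo (0:ℝ) (1/3))
    (hbdd : ∀ σ ∈ Set.Ioc (0:ℝ) 1, ∀ p ∈ S, ‖Φ σ p‖ ≤ 1)
    (h1 : ∀ σ ∈ Set.Ioc (0:ℝ) 1, ∀ p ∈ S, ∀ k, p + k ∈ S →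
      ‖Φ σ (p + k) - Φ σ p‖ ≤ C * ‖k‖ * σ ^ (-(1/2) : ℝ))
    (h2 : ∀ σ' σ : ℝ, 0 < σ' → σ' < σ → σ ≤ 1 → ∀ p ∈ S,
      ‖Φ σ p - Φ σ' p‖ ≤ C * σ ^ ((1 : ℝ) - δ)) :
    ∃ C' : ℝ, ∀ σ ∈ Set.Ioc (0:ℝ) 1, ∀ p ∈ S, ∀ k, p + k ∈ S →
      ‖Φ σ (p + k) - Φ σ p‖ ≤ C' * ‖k‖ ^ ((2/3) * (1 - δ)) := by
  refine ⟨max (3 * C) 2, fun σ hσ p hp k hpk => ?_⟩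
  have hα : 0 < 2 / 3 * (1 - δ) := by linarith [hδ.2]
  rcases eq_or_ne k 0 with rfl | hk
  · simp [Real.zero_rpow hα.ne']
  have hr := norm_pos_iff.2 hk
  rcases lt_or_ge ‖k‖ 1 with hk1 | hk1
  · calc ‖Φ σ (p + k) - Φ σ p‖ ≤ 3 * C * ‖k‖ ^ (2 / 3 * (1 - δ)) :=
          norm_sub_le_three_mul_rpow_of_scale_cauchy hδ.1.le hr hk1 (h1 · · p hp k hpk)
            (h2 · · · · · p hp) (h2 · · · · · (p + k) hpk) hσ
      _ ≤ _ := by gcongr; exact le_max_left _ _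
  · calc ‖Φ σ (p + k) - Φ σ p‖ ≤ ‖Φ σ (p + k)‖ + ‖Φ σ p‖ := norm_sub_le _ _
      _ ≤ 2 * 1 := by linarith [hbdd σ hσ _ hpk, hbdd σ hσ p hp]
      _ ≤ _ := mul_le_mul (le_max_right _ _) (Real.one_le_rpow hk1 hα.le) zero_le_one
          (by positivity)

/-- Let `(Φ_σ)_{σ ∈ (0,1]}` be a uniformly bounded
(`‖Φ_σ(p)‖ ≤ 1`) family of maps from a compact `S ⊆ ℝ³` into a Hilbert space
such that (i) `‖Φ_σ(p+k) - Φ_σ(p)‖ ≤ C |k| σ^{-1/2}` for `p, p+k ∈ S`, and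
(ii) `‖Φ_σ(p) - Φ_{σ'}(p)‖ ≤ C σ^{1-δ}` for `0 < σ' < σ ≤ 1`, with
`δ ∈ (0, 1/3)`.  Then there is `C'` such that for all `σ ∈ (0,1]` and
`p, p+k ∈ S`, `‖Φ_σ(p+k) - Φ_σ(p)‖ ≤ C' |k|^{(2/3)(1-δ)}`. -/
theorem stmt_14
    {F : Type*} [NormedAddCommGroup F] [InnerProductSpace ℂ F]
    (S : Set (EuclideanSpace ℝ (Fin 3))) (hS : IsCompact S)
    (Φ : ℝ → EuclideanSpace ℝ (Fin 3) → F)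
    (C δ : ℝ) (hδ : δ ∈ Set.Ioo (0:ℝ) (1/3))
    (hbdd : ∀ σ ∈ Set.Ioc (0:ℝ) 1, ∀ p ∈ S, ‖Φ σ p‖ ≤ 1)
    (h1 : ∀ σ ∈ Set.Ioc (0:ℝ) 1, ∀ p ∈ S, ∀ k, p + k ∈ S →
      ‖Φ σ (p + k) - Φ σ p‖ ≤ C * ‖k‖ * σ ^ (-(1/2) : ℝ))
    (h2 : ∀ σ' σ : ℝ, 0 < σ' → σ' < σ → σ ≤ 1 → ∀ p ∈ S,
      ‖Φ σ p - Φ σ' p‖ ≤ C * σ ^ ((1 : ℝ) - δ)) :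
    ∃ C' : ℝ, ∀ σ ∈ Set.Ioc (0:ℝ) 1, ∀ p ∈ S, ∀ k, p + k ∈ S →
      ‖Φ σ (p + k) - Φ σ p‖ ≤ C' * ‖k‖ ^ ((2/3) * (1 - δ)) :=
  stmt_14_general S Φ C δ hδ hbdd h1 h2
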